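/- arXiv:1406.1433 — 3 statements merged into one kernel-verified Lean document; each statement's English description precedes it below -/
import Mathlib

section
/- Let G be a finite simple graph with vertex set V, let k be a natural number, and let A and B be disjoint subsets of V such that every vertex of A is adjacent in G to every vertex of B. Let I and J be independent sets of G of size at least k lying in the same connected component of TAR_k(G), with I ∩ A = ∅ and J ∩ A ≠ ∅. Then the same connected component of TAR_k(G) contains an independent set K of size at least k with K ∩ (A ∪ B) = ∅. -/
/-- A finite set of vertices is independent if no two of its elements are adjacent. -/
def SimpleGraph.IsIndepFinset {V : Type*} (G : SimpleGraph V) (s : Finset V) : Prop :=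
  ∀ ⦃a⦄, a ∈ s → ∀ ⦃b⦄, b ∈ s → a ≠ b → ¬ G.Adj a b

/-- A maximal independent set: an independent set such that no proper superset is independent. -/
def SimpleGraph.IsMaxIndepFinset {V : Type*} (G : SimpleGraph V) (s : Finset V) : Prop :=
  G.IsIndepFinset s ∧ ∀ t : Finset V, G.IsIndepFinset t → s ⊆ t → t = s

/-- The independence number: the largest cardinality of an independent set. -/
noncomputable def SimpleGraph.indepNum' {V : Type*} [Fintype V] (G : SimpleGraph V) : ℕ :=
  sSup {n : ℕ | ∃ s : Finset V, G.IsIndepFinset s ∧ s.card = n}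

/-- The join of two simple graphs: their disjoint union together with all edges
between the two sides. -/
def SimpleGraph.join {α β : Type*} (G : SimpleGraph α) (H : SimpleGraph β) :
    SimpleGraph (α ⊕ β) where
  Adj u v := match u, v with
    | Sum.inl u, Sum.inl v => G.Adj u v
    | Sum.inr u, Sum.inr v => H.Adj u v
    | _, _ => True
  symm := ⟨fun u v => match u, v with
    | Sum.inl u, Sum.inl v => fun h => G.adj_symm h
    | Sum.inr u, Sum.inr v => fun h => H.adj_symm h
    | Sum.inl _, Sum.inr _ | Sum.inr _, Sum.inl _ => fun _ => trivial⟩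
  loopless := ⟨fun u => by cases u <;> simp⟩

/-- The token-addition-removal reconfiguration graph `TAR_k(G)`: its vertices are the
independent sets of `G` of size at least `k`, two of them being adjacent iff they
differ on exactly one vertex. -/
def SimpleGraph.TAR {V : Type*} [DecidableEq V] (G : SimpleGraph V) (k : ℕ) :
    SimpleGraph {I : Finset V // G.IsIndepFinset I ∧ k ≤ I.card} where
  Adj I J := (symmDiff I.1 J.1).card = 1
  symm := ⟨fun I J h => by simpa only [symmDiff_comm] using h⟩
  loopless := ⟨fun I h => by
    simp only [symmDiff_self, Finset.bot_eq_empty, Finset.card_empty] at h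
    exact absurd h (by norm_num)⟩

/-!
Walk in `TAR_k(G)` from `I` to `J` and stop at the last set `X` before the first one meeting `A`.
The next set is `X ∪ {a}` for some `a ∈ A`, and it is independent; since `a` is adjacent to every
vertex of `B`, `X` avoids `B` as well as `A`.
-/

open Finset

theorem SimpleGraph.Reachable.exists_adj_of_mem_of_notMem {V : Type*} {G : SimpleGraph V}
    {u v : V} (h : G.Reachable u v) (S : Set V) (hu : u ∈ S) (hv : v ∉ S) :
    ∃ x y, G.Reachable u x ∧ G.Adj x y ∧ x ∈ S ∧ y ∉ S := by
  classical
  obtain ⟨p⟩ := h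
  obtain ⟨d, hd, hx, hy⟩ := p.exists_boundary_dart S hu hv
  exact ⟨d.fst, d.snd, ⟨p.takeUntil _ (p.dart_fst_mem_support_of_mem_darts hd)⟩, d.adj, hx, hy⟩

theorem Finset.subset_of_card_symmDiff_eq_one {α : Type*} [DecidableEq α] {s t : Finset α}
    {a : α} (h : #(symmDiff s t) = 1) (hat : a ∈ t) (has : a ∉ s) : s ⊆ t := by
  intro x hxs
  by_contra hxt
  obtain ⟨c, hc⟩ := card_eq_one.1 h
  have hx : x ∈ symmDiff s t := mem_symmDiff.2 (.inl ⟨hxs, hxt⟩)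
  have ha : a ∈ symmDiff s t := mem_symmDiff.2 (.inr ⟨hat, has⟩)
  rw [hc, mem_singleton] at hx ha
  exact has (ha ▸ hx ▸ hxs)

theorem SimpleGraph.IsIndepFinset.disjoint_of_forall_adj {V : Type*} {G : SimpleGraph V}
    {X B : Finset V} {a : V} (hX : G.IsIndepFinset X) (ha : a ∈ X)
    (hadj : ∀ b ∈ B, G.Adj a b) : Disjoint X B := by
  refine Finset.disjoint_left.2 fun b hbX hbB => ?_
  have hab := hadj b hbB
  exact hX ha hbX hab.ne hab

theorem tar_reach_indep_avoiding_join_pair_general {V : Type*} [DecidableEq V]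
    (G : SimpleGraph V) (k : ℕ) (A B : Finset V)
    (hjoin : ∀ a ∈ A, ∀ b ∈ B, G.Adj a b)
    (I J : Finset V)
    (hI : G.IsIndepFinset I ∧ k ≤ I.card) (hJ : G.IsIndepFinset J ∧ k ≤ J.card)
    (hreach : (G.TAR k).Reachable ⟨I, hI⟩ ⟨J, hJ⟩)
    (hIA : I ∩ A = ∅) (hJA : J ∩ A ≠ ∅) :
    ∃ (K : Finset V) (hK : G.IsIndepFinset K ∧ k ≤ K.card),
      K ∩ (A ∪ B) = ∅ ∧ (G.TAR k).Reachable ⟨I, hI⟩ ⟨K, hK⟩ := by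
  obtain ⟨⟨X, hX⟩, ⟨Y, hY⟩, hIX, hXY, hXA, hYA⟩ :=
    hreach.exists_adj_of_mem_of_notMem {X | X.1 ∩ A = ∅} hIA hJA
  obtain ⟨a, haYA⟩ := nonempty_iff_ne_empty.2 hYA
  obtain ⟨haY, haA⟩ := mem_inter.1 haYA
  have haX : a ∉ X := fun haX => (eq_empty_iff_forall_notMem.1 hXA) a (mem_inter.2 ⟨haX, haA⟩)
  have hXB : Disjoint X B :=
    (hY.1.disjoint_of_forall_adj haY (hjoin a haA)).mono_left
      (subset_of_card_symmDiff_eq_one hXY haY haX)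
  refine ⟨X, hX, ?_, hIX⟩
  rw [inter_union_distrib_left, hXA, disjoint_iff_inter_eq_empty.1 hXB, empty_union]

theorem tar_reach_indep_avoiding_join_pair {V : Type*} [Fintype V] [DecidableEq V]
    (G : SimpleGraph V) (k : ℕ) (A B : Finset V) (hdisj : Disjoint A B)
    (hjoin : ∀ a ∈ A, ∀ b ∈ B, G.Adj a b)
    (I J : Finset V)
    (hI : G.IsIndepFinset I ∧ k ≤ I.card) (hJ : G.IsIndepFinset J ∧ k ≤ J.card)
    (hreach : (G.TAR k).Reachable ⟨I, hI⟩ ⟨J, hJ⟩)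
    (hIA : I ∩ A = ∅) (hJA : J ∩ A ≠ ∅) :
    ∃ (K : Finset V) (hK : G.IsIndepFinset K ∧ k ≤ K.card),
      K ∩ (A ∪ B) = ∅ ∧ (G.TAR k).Reachable ⟨I, hI⟩ ⟨K, hK⟩ :=
  tar_reach_indep_avoiding_join_pair_general G k A B hjoin I J hI hJ hreach hIA hJA
end

section
/- Let G be the join of two finite simple graphs G₁ and G₂ (with vertex sets V₁ and V₂), and let k ≥ 1. If I is an independent set of G of size at least k contained in V₁ and J is an independent set of G of size at least k contained in V₂, then I and J lie in different connected components of TAR_k(G). -/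
theorem Finset.subset_or_subset_of_card_symmDiff_eq_one {α : Type*} [DecidableEq α]
    {s t : Finset α} (h : (symmDiff s t).card = 1) : s ⊆ t ∨ t ⊆ s := by
  rw [symmDiff_def, Finset.sup_eq_union, Finset.card_union_of_disjoint disjoint_sdiff_sdiff] at h
  rw [← Finset.sdiff_eq_empty_iff_subset, ← Finset.sdiff_eq_empty_iff_subset,
    ← Finset.card_eq_zero, ← Finset.card_eq_zero]
  omega

namespace SimpleGraph

variable {V₁ V₂ : Type*} {G₁ : SimpleGraph V₁} {G₂ : SimpleGraph V₂}

theorem IsIndepFinset.inr_notMem_of_inl_mem {S : Finset (V₁ ⊕ V₂)}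
    (hS : (G₁.join G₂).IsIndepFinset S) {a : V₁} (ha : Sum.inl a ∈ S) (b : V₂) :
    Sum.inr b ∉ S := fun hb => hS ha hb Sum.inl_ne_inr trivial

variable [DecidableEq V₁] [DecidableEq V₂] {k : ℕ}

/-- A `TAR_k` step keeps at least one of the `k ≥ 1` tokens in place, and the join forbids
any new token on the other side next to it. -/
theorem TAR.adj_preserves_inl (hk : 1 ≤ k)
    {S S' : {I : Finset (V₁ ⊕ V₂) // (G₁.join G₂).IsIndepFinset I ∧ k ≤ I.card}}
    (hadj : ((G₁.join G₂).TAR k).Adj S S') (hS : ∀ x ∈ S.1, ∃ a : V₁, x = Sum.inl a) :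
    ∀ x ∈ S'.1, ∃ a : V₁, x = Sum.inl a := by
  rcases Finset.subset_or_subset_of_card_symmDiff_eq_one hadj with hsub | hsub
  · obtain ⟨z, hz⟩ := Finset.card_pos.mp (hk.trans S.2.2)
    obtain ⟨a, rfl⟩ := hS z hz
    rintro (a' | b) hx
    · exact ⟨a', rfl⟩
    · exact absurd hx (S'.2.1.inr_notMem_of_inl_mem (hsub hz) b)
  · exact fun x hx => hS x (hsub hx)

theorem TAR.reachable_preserves_inl (hk : 1 ≤ k)
    {S S' : {I : Finset (V₁ ⊕ V₂) // (G₁.join G₂).IsIndepFinset I ∧ k ≤ I.card}}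
    (hreach : ((G₁.join G₂).TAR k).Reachable S S') (hS : ∀ x ∈ S.1, ∃ a : V₁, x = Sum.inl a) :
    ∀ x ∈ S'.1, ∃ a : V₁, x = Sum.inl a := by
  obtain ⟨w⟩ := hreach
  induction w with
  | nil => exact hS
  | cons hadj _ ih => exact ih (TAR.adj_preserves_inl hk hadj hS)

end SimpleGraph

theorem tar_join_sides_not_reachable_general {V₁ V₂ : Type*}
    [DecidableEq V₁] [DecidableEq V₂]
    (G₁ : SimpleGraph V₁) (G₂ : SimpleGraph V₂) (k : ℕ) (hk : 1 ≤ k)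
    (I J : Finset (V₁ ⊕ V₂))
    (hI : (G₁.join G₂).IsIndepFinset I ∧ k ≤ I.card)
    (hJ : (G₁.join G₂).IsIndepFinset J ∧ k ≤ J.card)
    (hIleft : ∀ x ∈ I, ∃ a : V₁, x = Sum.inl a)
    (hJright : ∀ x ∈ J, ∃ b : V₂, x = Sum.inr b) :
    ¬ ((G₁.join G₂).TAR k).Reachable ⟨I, hI⟩ ⟨J, hJ⟩ := by
  intro hreach
  have hJleft := SimpleGraph.TAR.reachable_preserves_inl hk hreach hIleft
  obtain ⟨x, hx⟩ := Finset.card_pos.mp (hk.trans hJ.2)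
  obtain ⟨a, rfl⟩ := hJleft x hx
  obtain ⟨b, hb⟩ := hJright _ hx
  exact Sum.inl_ne_inr hb

theorem tar_join_sides_not_reachable {V₁ V₂ : Type*} [Fintype V₁] [Fintype V₂]
    [DecidableEq V₁] [DecidableEq V₂]
    (G₁ : SimpleGraph V₁) (G₂ : SimpleGraph V₂) (k : ℕ) (hk : 1 ≤ k)
    (I J : Finset (V₁ ⊕ V₂))
    (hI : (G₁.join G₂).IsIndepFinset I ∧ k ≤ I.card)
    (hJ : (G₁.join G₂).IsIndepFinset J ∧ k ≤ J.card)
    (hIleft : ∀ x ∈ I, ∃ a : V₁, x = Sum.inl a)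
    (hJright : ∀ x ∈ J, ∃ b : V₂, x = Sum.inr b) :
    ¬ ((G₁.join G₂).TAR k).Reachable ⟨I, hI⟩ ⟨J, hJ⟩ :=
  tar_join_sides_not_reachable_general G₁ G₂ k hk I J hI hJ hIleft hJright
end

section
/- Let G be a finite simple graph with vertex set V, let k be a natural number, and let A and B be disjoint nonempty subsets of V such that: every vertex of A is adjacent in G to every vertex of B; the set A ∪ B is a module of G (every vertex of V \ (A ∪ B) is adjacent either to all vertices of A ∪ B or to none of them); and the independence number of the subgraph of G induced by A is at least the independence number of the subgraph induced by B. If I and J are independent sets of G of size at least k with I ∩ B = ∅ and J ∩ B = ∅, and I and J lie in the same connected component of TAR_k(G), then there is a path from I to J in TAR_k(G) all of whose vertices are independent sets disjoint from B; equivalently, I and J lie in the same connected component of TAR_k(G − B), where G − B is the subgraph of G induced by V \ B. -/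
/-!
Fix a maximum independent set `S` of `G[A]`, listed as `s₀, s₁, …`, and send an independent set
`X` to `(X \ B) ∪ {s₀, …, s_{m-1}}` with `m = |X ∩ B|`; since `α(G[B]) ≤ α(G[A])` there are
enough `sᵢ`. An independent set meeting `B` misses `A`, which is complete to `B`, so sizes are
preserved. A vertex of `X` outside `A ∪ B` is not adjacent to the vertices of `X ∩ B`, hence by
the module property to none of `A ∪ B`, so the image is independent. Adding a token of `B` adds
the next `sᵢ`, adding any other token adds that token, so the map is an endomorphism of
`TAR_k(G)`. It fixes the sets disjoint from `B` and its image avoids `B`: it carries a walk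
from `I` to `J` to one avoiding `B`.
-/

open Finset

namespace Finset

variable {α : Type*} [DecidableEq α]

lemma symmDiff_insert_self {s : Finset α} {a : α} (ha : a ∉ s) :
    symmDiff s (insert a s) = {a} := by
  ext x
  by_cases hx : x = a <;> simp_all [mem_symmDiff]

lemma eq_insert_or_eq_insert_of_card_symmDiff_eq_one {s t : Finset α}
    (h : #(symmDiff s t) = 1) :
    (∃ a ∉ s, t = insert a s) ∨ ∃ a ∉ t, s = insert a t := by
  obtain ⟨a, ha⟩ := card_eq_one.mp h
  have ht : t = symmDiff s {a} := by rw [← ha, symmDiff_symmDiff_cancel_left]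
  by_cases has : a ∈ s
  · refine .inr ⟨a, by simp [ht, has, mem_symmDiff], ?_⟩
    ext x
    by_cases hx : x = a <;> simp_all [mem_symmDiff]
  · refine .inl ⟨a, has, ?_⟩
    ext x
    by_cases hx : x = a <;> simp_all [mem_symmDiff]

end Finset

namespace List

variable {α : Type*} {l : List α} {m : ℕ}

lemma Nodup.getElem_notMem_take (hl : l.Nodup) (hm : m < l.length) : l[m] ∉ l.take m := by
  rw [mem_take_iff_getElem]
  rintro ⟨j, hj, hjm⟩
  have := (hl.getElem_inj_iff).mp hjm
  omega

variable [DecidableEq α]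

lemma toFinset_take_add_one (hm : m < l.length) :
    (l.take (m + 1)).toFinset = insert l[m] (l.take m).toFinset := by
  rw [← take_concat_get hm, concat_eq_append, toFinset_append]
  simp

lemma Nodup.card_toFinset_take (hl : l.Nodup) (hm : m ≤ l.length) :
    #(l.take m).toFinset = m := by
  rw [toFinset_card_of_nodup ((take_sublist m l).nodup hl), length_take, min_eq_left hm]

end List

namespace SimpleGraph

variable {V W : Type*} {G : SimpleGraph V} {H : SimpleGraph W}

lemma isIndepFinset_map_iff (f : H ↪g G) {t : Finset W} :
    G.IsIndepFinset (t.map f.toEmbedding) ↔ H.IsIndepFinset t := by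
  simp [IsIndepFinset]

lemma IsIndepFinset.subset {s t : Finset V} (ht : G.IsIndepFinset t) (hst : s ⊆ t) :
    G.IsIndepFinset s :=
  fun _ ha _ hb => ht (hst ha) (hst hb)

lemma IsIndepFinset.disjoint_of_forall_adj_s11 {X A : Finset V} {b : V} (hX : G.IsIndepFinset X)
    (hb : b ∈ X) (hadj : ∀ a ∈ A, G.Adj a b) : Disjoint X A :=
  Finset.disjoint_left.mpr fun a ha haA => hX ha hb (hadj a haA).ne (hadj a haA)

lemma bddAbove_indepFinset_cards [Fintype V] :
    BddAbove {n | ∃ s : Finset V, G.IsIndepFinset s ∧ #s = n} :=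
  ⟨Fintype.card V, by rintro _ ⟨s, -, rfl⟩; exact card_le_univ s⟩

lemma IsIndepFinset.card_le_indepNum' [Fintype V] {s : Finset V} (hs : G.IsIndepFinset s) :
    #s ≤ G.indepNum' :=
  le_csSup bddAbove_indepFinset_cards ⟨s, hs, rfl⟩

lemma exists_isIndepFinset_card_eq_indepNum' [Fintype V] :
    ∃ s, G.IsIndepFinset s ∧ #s = G.indepNum' :=
  Nat.sSup_mem (s := {n | ∃ s : Finset V, G.IsIndepFinset s ∧ #s = n})
    ⟨0, ∅, by simp [IsIndepFinset], rfl⟩ bddAbove_indepFinset_cards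

lemma IsIndepFinset.card_le_indepNum'_induce {s T : Finset V} (hs : G.IsIndepFinset s)
    (hsT : s ⊆ T) : #s ≤ (G.induce (T : Set V)).indepNum' := by
  classical
  have hmap : (s.subtype (· ∈ (T : Set V))).map (Embedding.induce (G := G) _).toEmbedding = s :=
    subtype_map_of_mem fun x hx => hsT hx
  rw [← hmap, card_map]
  exact ((isIndepFinset_map_iff _).mp (hmap ▸ hs)).card_le_indepNum'

lemma exists_isIndepFinset_subset_card_eq_indepNum'_induce (T : Finset V) :
    ∃ s ⊆ T, G.IsIndepFinset s ∧ #s = (G.induce (T : Set V)).indepNum' := by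
  obtain ⟨t, ht, hcard⟩ := (G.induce (T : Set V)).exists_isIndepFinset_card_eq_indepNum'
  refine ⟨t.map (Embedding.induce _).toEmbedding, ?_, (isIndepFinset_map_iff _).mpr ht,
    by rw [card_map, hcard]⟩
  intro x hx
  obtain ⟨y, -, rfl⟩ := mem_map.mp hx
  exact y.2

variable [DecidableEq V] {k : ℕ}

def TAR.homOfInsert (F : Finset V → Finset V)
    (hindep : ∀ X, G.IsIndepFinset X → G.IsIndepFinset (F X))
    (hcard : ∀ X, G.IsIndepFinset X → #X ≤ #(F X))
    (hinsert : ∀ X v, v ∉ X → G.IsIndepFinset (insert v X) →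
      ∃ w ∉ F X, F (insert v X) = insert w (F X)) :
    G.TAR k →g G.TAR k where
  toFun X := ⟨F X, hindep X X.2.1, X.2.2.trans (hcard X X.2.1)⟩
  map_rel' {X Y} hXY := by
    change #(symmDiff (F X) (F Y)) = 1
    rcases eq_insert_or_eq_insert_of_card_symmDiff_eq_one hXY with ⟨v, hv, hY⟩ | ⟨v, hv, hX⟩
    · obtain ⟨w, hw, hFY⟩ := hinsert X v hv (hY ▸ Y.2.1)
      rw [hY, hFY, symmDiff_insert_self hw, card_singleton]
    · obtain ⟨w, hw, hFX⟩ := hinsert Y v hv (hX ▸ X.2.1)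
      rw [symmDiff_comm, hX, hFX, symmDiff_insert_self hw, card_singleton]

end SimpleGraph

section ReplaceByPrefix

open SimpleGraph

variable {V : Type*} [DecidableEq V] {G : SimpleGraph V} {A B X : Finset V} {l : List V}

def replaceByPrefix (B : Finset V) (l : List V) (X : Finset V) : Finset V :=
  X \ B ∪ (l.take #(X ∩ B)).toFinset

lemma replaceByPrefix_of_disjoint (h : Disjoint X B) : replaceByPrefix B l X = X := by
  simp [replaceByPrefix, disjoint_iff_inter_eq_empty.mp h, sdiff_eq_self_of_disjoint h]

lemma disjoint_replaceByPrefix (hAB : Disjoint A B) (hlA : ∀ x ∈ l, x ∈ A) :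
    Disjoint (replaceByPrefix B l X) B :=
  disjoint_union_left.mpr ⟨sdiff_disjoint, hAB.mono_left fun x hx =>
    hlA x (List.mem_of_mem_take (List.mem_toFinset.mp hx))⟩

lemma disjoint_sdiff_toFinset_take (hjoin : ∀ a ∈ A, ∀ b ∈ B, G.Adj a b)
    (hlA : ∀ x ∈ l, x ∈ A) (hX : G.IsIndepFinset X) :
    Disjoint (X \ B) (l.take #(X ∩ B)).toFinset := by
  rcases (X ∩ B).eq_empty_or_nonempty with hXB | ⟨b, hb⟩
  · simp [hXB]
  · obtain ⟨hbX, hbB⟩ := mem_inter.mp hb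
    have hXA := hX.disjoint_of_forall_adj_s11 hbX fun a ha => hjoin a ha b hbB
    exact (hXA.mono_left sdiff_subset).mono_right fun x hx =>
      hlA x (List.mem_of_mem_take (List.mem_toFinset.mp hx))

lemma card_replaceByPrefix (hjoin : ∀ a ∈ A, ∀ b ∈ B, G.Adj a b) (hlA : ∀ x ∈ l, x ∈ A)
    (hl : l.Nodup) (hX : G.IsIndepFinset X) (hlen : #(X ∩ B) ≤ l.length) :
    #(replaceByPrefix B l X) = #X := by
  rw [replaceByPrefix, card_union_of_disjoint (disjoint_sdiff_toFinset_take hjoin hlA hX),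
    hl.card_toFinset_take hlen, card_sdiff_add_card_inter]

lemma isIndepFinset_replaceByPrefix (hjoin : ∀ a ∈ A, ∀ b ∈ B, G.Adj a b)
    (hmodule : ∀ v : V, v ∉ A ∪ B →
      (∀ w ∈ A ∪ B, G.Adj v w) ∨ (∀ w ∈ A ∪ B, ¬ G.Adj v w))
    (hlA : ∀ x ∈ l, x ∈ A) (hl : G.IsIndepFinset l.toFinset) (hX : G.IsIndepFinset X) :
    G.IsIndepFinset (replaceByPrefix B l X) := by
  have hprefix : ∀ y ∈ (l.take #(X ∩ B)).toFinset, y ∈ l.toFinset := fun y hy =>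
    List.mem_toFinset.mpr (List.mem_of_mem_take (List.mem_toFinset.mp hy))
  have hmixed : ∀ x ∈ X \ B, ∀ y ∈ (l.take #(X ∩ B)).toFinset, ¬ G.Adj x y := by
    intro x hx y hy
    obtain ⟨b, hb⟩ : (X ∩ B).Nonempty := nonempty_iff_ne_empty.mpr fun h => by simp [h] at hy
    rw [mem_sdiff] at hx
    rw [mem_inter] at hb
    have hxA : x ∉ A := Finset.disjoint_left.mp
      (hX.disjoint_of_forall_adj_s11 hb.1 fun a ha => hjoin a ha b hb.2) hx.1
    rcases hmodule x (by simp [hxA, hx.2]) with hall | hnone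
    · exact absurd (hall b (mem_union_right _ hb.2))
        (hX hx.1 hb.1 (ne_of_mem_of_not_mem hb.2 hx.2).symm)
    · exact hnone y (mem_union_left _ (hlA y (List.mem_toFinset.mp (hprefix y hy))))
  intro x hx y hy hxy
  rcases mem_union.mp hx with hx | hx <;> rcases mem_union.mp hy with hy | hy
  · exact hX (mem_sdiff.mp hx).1 (mem_sdiff.mp hy).1 hxy
  · exact hmixed x hx y hy
  · exact fun h => hmixed y hy x hx h.symm
  · exact hl (hprefix x hx) (hprefix y hy) hxy

lemma replaceByPrefix_insert (hjoin : ∀ a ∈ A, ∀ b ∈ B, G.Adj a b) (hlA : ∀ x ∈ l, x ∈ A)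
    (hl : l.Nodup) {v : V} (hv : v ∉ X) (hY : G.IsIndepFinset (insert v X))
    (hlen : #(insert v X ∩ B) ≤ l.length) :
    ∃ w ∉ replaceByPrefix B l X,
      replaceByPrefix B l (insert v X) = insert w (replaceByPrefix B l X) := by
  have hdisj := disjoint_sdiff_toFinset_take hjoin hlA hY
  by_cases hvB : v ∈ B
  · have hcard : #(insert v X ∩ B) = #(X ∩ B) + 1 := by
      rw [insert_inter_of_mem hvB, card_insert_of_notMem fun h => hv (mem_inter.mp h).1]
    have hm : #(X ∩ B) < l.length := by omega
    have hYA : Disjoint (insert v X) A :=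
      hY.disjoint_of_forall_adj_s11 (mem_insert_self v X) fun a ha => hjoin a ha v hvB
    refine ⟨l[#(X ∩ B)], ?_, ?_⟩
    · simp only [replaceByPrefix, mem_union, mem_sdiff, List.mem_toFinset, not_or, not_and]
      refine ⟨fun hX _ => Finset.disjoint_left.mp hYA (mem_insert_of_mem hX)
        (hlA _ (List.getElem_mem hm)), hl.getElem_notMem_take hm⟩
    · rw [replaceByPrefix, replaceByPrefix, insert_sdiff_of_mem _ hvB, hcard,
        List.toFinset_take_add_one hm, union_insert]
  · have hcard : insert v X ∩ B = X ∩ B := insert_inter_of_notMem hvB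
    refine ⟨v, ?_, ?_⟩
    · rw [insert_sdiff_of_notMem _ hvB, hcard] at hdisj
      simp only [replaceByPrefix, mem_union, mem_sdiff, not_or, not_and]
      exact ⟨fun h => absurd h hv, Finset.disjoint_left.mp hdisj (mem_insert_self _ _)⟩
    · rw [replaceByPrefix, replaceByPrefix, insert_sdiff_of_notMem _ hvB, hcard, insert_union]

end ReplaceByPrefix

theorem tar_path_avoiding_bad_side_general {V : Type*} [Fintype V] [DecidableEq V]
    (G : SimpleGraph V) (k : ℕ) (A B : Finset V)
    (hdisj : Disjoint A B)
    (hjoin : ∀ a ∈ A, ∀ b ∈ B, G.Adj a b)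
    (hmodule : ∀ v : V, v ∉ A ∪ B →
      (∀ w ∈ A ∪ B, G.Adj v w) ∨ (∀ w ∈ A ∪ B, ¬ G.Adj v w))
    (halpha : (G.induce (B : Set V)).indepNum' ≤ (G.induce (A : Set V)).indepNum')
    (I J : Finset V)
    (hI : G.IsIndepFinset I ∧ k ≤ I.card) (hJ : G.IsIndepFinset J ∧ k ≤ J.card)
    (hIB : I ∩ B = ∅) (hJB : J ∩ B = ∅)
    (hreach : (G.TAR k).Reachable ⟨I, hI⟩ ⟨J, hJ⟩) :
    ∃ p : (G.TAR k).Walk ⟨I, hI⟩ ⟨J, hJ⟩,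
      ∀ x ∈ p.support, (x : Finset V) ∩ B = ∅ := by
  obtain ⟨S, hSA, hS, hScard⟩ := G.exists_isIndepFinset_subset_card_eq_indepNum'_induce A
  have hlA : ∀ x ∈ S.toList, x ∈ A := fun x hx => hSA (mem_toList.mp hx)
  have hlen : ∀ X, G.IsIndepFinset X → #(X ∩ B) ≤ S.toList.length := fun X hX => by
    rw [length_toList, hScard]
    exact ((hX.subset inter_subset_left).card_le_indepNum'_induce inter_subset_right).trans halpha
  let f : G.TAR k →g G.TAR k := SimpleGraph.TAR.homOfInsert (replaceByPrefix B S.toList)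
    (fun X hX => isIndepFinset_replaceByPrefix hjoin hmodule hlA (by rwa [toList_toFinset]) hX)
    (fun X hX => (card_replaceByPrefix hjoin hlA S.nodup_toList hX (hlen X hX)).ge)
    (fun X v hv hY => replaceByPrefix_insert hjoin hlA S.nodup_toList hv hY (hlen _ hY))
  have hfix : ∀ X hX, X ∩ B = ∅ → f ⟨X, hX⟩ = ⟨X, hX⟩ := fun X hX hXB =>
    Subtype.ext (replaceByPrefix_of_disjoint (disjoint_iff_inter_eq_empty.mpr hXB))
  obtain ⟨p⟩ := hreach
  refine ⟨(p.map f).copy (hfix I hI hIB) (hfix J hJ hJB), fun x hx => ?_⟩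
  rw [SimpleGraph.Walk.support_copy, SimpleGraph.Walk.support_map, List.mem_map] at hx
  obtain ⟨y, -, rfl⟩ := hx
  exact disjoint_iff_inter_eq_empty.mp (disjoint_replaceByPrefix hdisj hlA)

theorem tar_path_avoiding_bad_side {V : Type*} [Fintype V] [DecidableEq V]
    (G : SimpleGraph V) (k : ℕ) (A B : Finset V)
    (hAne : A.Nonempty) (hBne : B.Nonempty) (hdisj : Disjoint A B)
    (hjoin : ∀ a ∈ A, ∀ b ∈ B, G.Adj a b)
    (hmodule : ∀ v : V, v ∉ A ∪ B →
      (∀ w ∈ A ∪ B, G.Adj v w) ∨ (∀ w ∈ A ∪ B, ¬ G.Adj v w))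
    (halpha : (G.induce (B : Set V)).indepNum' ≤ (G.induce (A : Set V)).indepNum')
    (I J : Finset V)
    (hI : G.IsIndepFinset I ∧ k ≤ I.card) (hJ : G.IsIndepFinset J ∧ k ≤ J.card)
    (hIB : I ∩ B = ∅) (hJB : J ∩ B = ∅)
    (hreach : (G.TAR k).Reachable ⟨I, hI⟩ ⟨J, hJ⟩) :
    ∃ p : (G.TAR k).Walk ⟨I, hI⟩ ⟨J, hJ⟩,
      ∀ x ∈ p.support, (x : Finset V) ∩ B = ∅ :=
  tar_path_avoiding_bad_side_general G k A B hdisj hjoin hmodule halpha I J hI hJ hIB hJB hreach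
end
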